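/- arXiv:0806.4686 — 3 statements merged into one kernel-verified Lean document; each statement's English description precedes it below -/
import Mathlib

section
/- One-step regret bound for truncated gradient: Let L(·, z) be convex with ‖∇₁L(w,z)‖² ≤ A·L(w,z) + B for all w. Let w' = T₁(w - η∇₁L(w,z), gη, θ) with η > 0, g ≥ 0, gη ≤ θ. Then for all w̄ ∈ ℝᵈ: (1 - 0.5Aη)·L(w,z) + g·‖w'·I(|w'| ≤ θ)‖₁ ≤ L(w̄,z) + g·‖w̄·I(|w'| ≤ θ)‖₁ + (η/2)·B + (‖w̄ - w‖² - ‖w̄ - w'‖²)/(2η). -/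
/-!
With `u = w - η ∇`, in every coordinate where `|w'ⱼ| ≤ θ` the update is soft thresholding, the
proximal map of `gη |·|`, so `u - w'` is a subgradient of `gη |·|` at `w'`; the three-point
inequality of proximal steps then gives
`(w̄ⱼ - w'ⱼ)² + 2gη |w'ⱼ| ≤ (w̄ⱼ - uⱼ)² + 2gη |w̄ⱼ|`, while elsewhere `w'ⱼ = uⱼ`.
Summing, expanding `‖w̄ - u‖²`, and bounding `(w̄ - w)ᵀ∇` by convexity and `‖∇‖²` by the
hypothesis gives the claim after division by `2η`.
-/

open Finset

/-- Truncation operator with threshold `θ` and shrinkage `α`. -/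
noncomputable def T1 (v α θ : ℝ) : ℝ :=
  if 0 ≤ v ∧ v ≤ θ then max 0 (v - α)
  else if -θ ≤ v ∧ v ≤ 0 then min 0 (v + α)
  else v

section T1

variable {u α θ : ℝ}

theorem T1_eq_self_of_lt_abs (h : θ < |u|) : T1 u α θ = u := by
  have : ¬ (0 ≤ u ∧ u ≤ θ) ∧ ¬ (-θ ≤ u ∧ u ≤ 0) := by
    constructor <;> rintro ⟨h₁, h₂⟩
    · rw [abs_of_nonneg h₁] at h; linarith
    · rw [abs_of_nonpos h₂] at h; linarith
  simp only [T1, if_neg this.1, if_neg this.2]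

theorem abs_T1_le (hα : 0 ≤ α) : |T1 u α θ| ≤ |u| := by
  unfold T1
  split_ifs with h₁ h₂
  · rw [abs_of_nonneg (le_max_left _ _), abs_of_nonneg h₁.1]
    exact max_le h₁.1 (by linarith)
  · rw [abs_of_nonpos (min_le_left _ _), abs_of_nonpos h₂.2, neg_le_neg_iff]
    exact le_min h₂.2 (by linarith)
  · rfl

theorem abs_T1_le_iff (hα : 0 ≤ α) : |T1 u α θ| ≤ θ ↔ |u| ≤ θ := by
  refine ⟨fun h => ?_, fun h => (abs_T1_le hα).trans h⟩
  by_contra! hu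
  rw [T1_eq_self_of_lt_abs hu] at h
  exact hu.not_ge h

/-- Inside the threshold `T1 · α θ` is soft thresholding, the proximal map of `α |·|`. -/
theorem sub_T1_mul_sub_le (hα : 0 ≤ α) (hu : |u| ≤ θ) (b : ℝ) :
    (u - T1 u α θ) * (b - T1 u α θ) ≤ α * (|b| - |T1 u α θ|) := by
  rcases abs_le.mp hu with ⟨hθu, huθ⟩
  rcases le_or_gt 0 u with hu₀ | hu₀
  · rw [T1, if_pos ⟨hu₀, huθ⟩]
    rcases le_total u α with hs | hs
    · rw [max_eq_left (by linarith), abs_zero]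
      nlinarith [neg_abs_le b, le_abs_self b]
    · rw [max_eq_right (by linarith), abs_of_nonneg (sub_nonneg.mpr hs)]
      nlinarith [mul_le_mul_of_nonneg_left (le_abs_self b) hα]
  · rw [T1, if_neg (by intro h; linarith [h.1]), if_pos ⟨hθu, hu₀.le⟩]
    rcases le_total (-α) u with hs | hs
    · rw [min_eq_left (by linarith), abs_zero]
      nlinarith [neg_abs_le b, le_abs_self b]
    · rw [min_eq_right (by linarith), abs_of_nonpos (by linarith : u + α ≤ 0)]
      nlinarith [mul_le_mul_of_nonneg_left (neg_abs_le b) hα]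

theorem sq_sub_T1_add_le (hα : 0 ≤ α) (b : ℝ) :
    (b - T1 u α θ) ^ 2 + 2 * α * (|T1 u α θ| * if |T1 u α θ| ≤ θ then 1 else 0)
      ≤ (b - u) ^ 2 + 2 * α * (|b| * if |T1 u α θ| ≤ θ then 1 else 0) := by
  simp only [abs_T1_le_iff hα]
  split_ifs with hu
  · linear_combination 2 * sub_T1_mul_sub_le hα hu b + sq_nonneg (u - T1 u α θ)
  · simp [T1_eq_self_of_lt_abs (not_le.mp hu)]

end T1

theorem truncated_gradient_one_step_general (d : ℕ) (L : (Fin d → ℝ) → ℝ)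
    (A B η g θ : ℝ) (hη : 0 < η) (hg : 0 ≤ g)
    (w grad : Fin d → ℝ)
    (hsub : ∀ v : Fin d → ℝ, ∑ j, (v j - w j) * grad j ≤ L v - L w)
    (hgrad : ∑ j, (grad j) ^ 2 ≤ A * L w + B)
    (w' : Fin d → ℝ) (hw' : ∀ j, w' j = T1 (w j - η * grad j) (g * η) θ)
    (wbar : Fin d → ℝ) :
    (1 - 0.5 * A * η) * L w
        + g * ∑ j, |w' j| * (if |w' j| ≤ θ then (1 : ℝ) else 0)
      ≤ L wbar + g * ∑ j, |wbar j| * (if |w' j| ≤ θ then (1 : ℝ) else 0)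
        + (η / 2) * B
        + ((∑ j, (wbar j - w j) ^ 2) - ∑ j, (wbar j - w' j) ^ 2) / (2 * η) := by
  set I : Fin d → ℝ := fun j => if |w' j| ≤ θ then 1 else 0
  have hcoord : ∀ j, (wbar j - w' j) ^ 2 + 2 * (g * η) * (|w' j| * I j)
      ≤ (wbar j - w j) ^ 2 + 2 * η * ((wbar j - w j) * grad j) + η ^ 2 * grad j ^ 2
        + 2 * (g * η) * (|wbar j| * I j) := fun j => by
    have h := sq_sub_T1_add_le (α := g * η) (θ := θ) (u := w j - η * grad j)
      (by positivity) (wbar j)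
    rw [← hw' j] at h
    linear_combination h
  have hsum := Finset.sum_le_sum fun j (_ : j ∈ univ) => hcoord j
  simp only [Finset.sum_add_distrib, ← Finset.mul_sum] at hsum
  have hlin := mul_le_mul_of_nonneg_left (hsub wbar) (by positivity : 0 ≤ 2 * η)
  have hquad := mul_le_mul_of_nonneg_left hgrad (by positivity : 0 ≤ η ^ 2)
  rw [← sub_le_iff_le_add', le_div_iff₀ (by positivity)]
  linear_combination hsum + hlin + hquad

/-- One-step regret bound for the truncated gradient update (Lemma 5). -/
theorem truncated_gradient_one_step (d : ℕ) (L : (Fin d → ℝ) → ℝ)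
    (A B η g θ : ℝ) (hA : 0 ≤ A) (hB : 0 ≤ B) (hη : 0 < η) (hg : 0 ≤ g)
    (hgθ : g * η ≤ θ)
    (w grad : Fin d → ℝ)
    (hsub : ∀ v : Fin d → ℝ, ∑ j, (v j - w j) * grad j ≤ L v - L w)
    (hgrad : ∑ j, (grad j) ^ 2 ≤ A * L w + B)
    (w' : Fin d → ℝ) (hw' : ∀ j, w' j = T1 (w j - η * grad j) (g * η) θ)
    (wbar : Fin d → ℝ) :
    (1 - 0.5 * A * η) * L w
        + g * ∑ j, |w' j| * (if |w' j| ≤ θ then (1 : ℝ) else 0)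
      ≤ L wbar + g * ∑ j, |wbar j| * (if |w' j| ≤ θ then (1 : ℝ) else 0)
        + (η / 2) * B
        + ((∑ j, (wbar j - w j) ^ 2) - ∑ j, (wbar j - w' j) ^ 2) / (2 * η) :=
  truncated_gradient_one_step_general d L A B η g θ hη hg w grad hsub hgrad w' hw' wbar
end

section
/- Stochastic regularized regret bound (Theorem 3): with training data z₁,…,z_n, R(w, g) = (1/n)Σᵢ L(w, zᵢ) + g‖w‖₁, updates w_{t+1} = T(w_t - η∇₁L(w_t, z_{i_t}), gη) with w₁ = 0 and i_t uniform on {1,…,n}, and under the gradient-bound assumption with Aη < 2, for all w̄: E[(1-0.5Aη)/T · Σ_{t=1}^T R(w_t, g/(1-0.5Aη))] ≤ (η/2)B + ‖w̄‖²/(2ηT) + R(w̄, g). -/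
/-!
Soft truncation `T · (g η)` is the proximal map of `g η ‖·‖₁`, so one truncated gradient step
from `u` to `u'`, combined with convexity of the loss and the gradient bound, gives
`2η((1 - Aη/2) ℓ(u) + g‖u‖₁) + Φ(u') ≤ 2η(ℓ(w̄) + g‖w̄‖₁) + η²B + Φ(u)` for the potential
`Φ(u) = ‖w̄ - u‖² + 2gη‖u‖₁`. Telescoping yields a regret bound along every draw sequence.
Since `w_t` depends only on the draws before time `t`, re-drawing `i_t` independently does not
change the expectation, which turns the sampled losses `L(w_t, z_{i_t})` into the empirical
risk; averaging the pathwise bound then gives the theorem.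
-/

open Finset

/-- Soft-truncation operator (`T₁` with `θ = ∞`). -/
noncomputable def T (v α : ℝ) : ℝ := if v > 0 then max 0 (v - α) else min 0 (v + α)

open Function
open scoped BigOperators

/-- `T v α` minimizes `x ↦ (x - v)² / 2 + α |x|`; this is its first-order optimality condition. -/
lemma T_prox (v α x : ℝ) (hα : 0 ≤ α) :
    (x - T v α) * (v - T v α) ≤ α * (|x| - |T v α|) := by
  have h1 := le_abs_self x
  have h2 := neg_abs_le x
  have h3 := abs_nonneg x
  unfold T
  split_ifs with h
  · rcases le_total (v - α) 0 with h4 | h4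
    · rw [max_eq_left h4]
      simp only [sub_zero, abs_zero]
      nlinarith [mul_nonneg (by linarith : (0:ℝ) ≤ |x| - x) (le_of_lt h),
        mul_nonneg h3 (by linarith : (0:ℝ) ≤ α - v)]
    · rw [max_eq_right h4, abs_of_nonneg h4]
      nlinarith [mul_nonneg hα (by linarith : (0:ℝ) ≤ |x| - x)]
  · push Not at h
    rcases le_total 0 (v + α) with h4 | h4
    · rw [min_eq_left h4]
      simp only [sub_zero, abs_zero]
      nlinarith [mul_nonneg (by linarith : (0:ℝ) ≤ |x| + x) (by linarith : (0:ℝ) ≤ -v),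
        mul_nonneg h3 (by linarith : (0:ℝ) ≤ α + v)]
    · rw [min_eq_right h4, abs_of_nonpos h4]
      nlinarith [mul_nonneg hα (by linarith : (0:ℝ) ≤ |x| + x)]

lemma sq_sub_T_add_abs_le (u G v η α : ℝ) (hα : 0 ≤ α) :
    (v - T (u - η * G) α) ^ 2 + 2 * α * |T (u - η * G) α|
      ≤ (v - u) ^ 2 + 2 * α * |v| + 2 * η * ((v - u) * G) + η ^ 2 * G ^ 2 := by
  have := T_prox (u - η * G) α v hα
  nlinarith [sq_nonneg (u - η * G - T (u - η * G) α)]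

lemma sum_le_sum_add_of_le_add_sub {N : ℕ} {a b : Fin N → ℝ} {Φ : ℕ → ℝ}
    (h : ∀ t : Fin N, a t + Φ (t + 1) ≤ b t + Φ t) (hΦ : 0 ≤ Φ N) :
    ∑ t, a t ≤ ∑ t, b t + Φ 0 := by
  have htele : ∑ t : Fin N, (Φ t - Φ (t + 1)) = Φ 0 - Φ N := by
    rw [Fin.sum_univ_eq_sum_range (fun t => Φ t - Φ (t + 1)), sum_range_sub']
  calc ∑ t, a t ≤ ∑ t, (b t + (Φ t - Φ (t + 1))) := sum_le_sum fun t _ => by linarith [h t]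
    _ = ∑ t, b t + (Φ 0 - Φ N) := by rw [sum_add_distrib, htele]
    _ ≤ ∑ t, b t + Φ 0 := by linarith

section TruncatedGradient

variable {ι : Type*} [Fintype ι] {A B η g : ℝ}

lemma truncated_gradient_step (ℓ : (ι → ℝ) → ℝ) (G u v u' : ι → ℝ) (hη : 0 ≤ η) (hg : 0 ≤ g)
    (hsub : ∑ j, (v j - u j) * G j ≤ ℓ v - ℓ u) (hG : ∑ j, G j ^ 2 ≤ A * ℓ u + B)
    (hu' : ∀ j, u' j = T (u j - η * G j) (g * η)) :
    2 * η * ((1 - A * η / 2) * ℓ u + g * ∑ j, |u j|)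
        + (∑ j, (v j - u' j) ^ 2 + 2 * (g * η) * ∑ j, |u' j|)
      ≤ 2 * η * (ℓ v + g * ∑ j, |v j|) + η ^ 2 * B
        + (∑ j, (v j - u j) ^ 2 + 2 * (g * η) * ∑ j, |u j|) := by
  have hcoord := sum_le_sum fun j (_ : j ∈ univ) =>
    sq_sub_T_add_abs_le (u j) (G j) (v j) η (g * η) (by positivity)
  simp only [← hu', sum_add_distrib, ← mul_sum] at hcoord
  have hlin := mul_le_mul_of_nonneg_left hsub (by positivity : 0 ≤ 2 * η)
  have hquad := mul_le_mul_of_nonneg_left hG (sq_nonneg η)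
  nlinarith

theorem truncated_gradient_regret {N : ℕ} (ℓ : Fin N → (ι → ℝ) → ℝ) (G : Fin N → ι → ℝ)
    (u : ℕ → ι → ℝ) (v : ι → ℝ) (hη : 0 < η) (hg : 0 ≤ g)
    (hsub : ∀ t : Fin N, ∑ j, (v j - u t j) * G t j ≤ ℓ t v - ℓ t (u t))
    (hG : ∀ t : Fin N, ∑ j, G t j ^ 2 ≤ A * ℓ t (u t) + B)
    (hu0 : ∀ j, u 0 j = 0)
    (hu : ∀ (t : Fin N) j, u (t + 1) j = T (u t j - η * G t j) (g * η)) :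
    ∑ t, ((1 - A * η / 2) * ℓ t (u t) + g * ∑ j, |u t j|)
      ≤ ∑ t, (ℓ t v + g * ∑ j, |v j|) + (N * η ^ 2 * B + ∑ j, v j ^ 2) / (2 * η) := by
  have h := sum_le_sum_add_of_le_add_sub
    (Φ := fun s => ∑ j, (v j - u s j) ^ 2 + 2 * (g * η) * ∑ j, |u s j|)
    (fun t => truncated_gradient_step (ℓ t) (G t) (u t) v (u (t + 1)) hη.le hg
      (hsub t) (hG t) (hu t)) (by positivity)
  simp only [hu0, sub_zero, abs_zero, sum_const_zero, mul_zero, add_zero] at h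
  have hleft := mul_sum univ (fun t => (1 - A * η / 2) * ℓ t (u t) + g * ∑ j, |u t j|) (2 * η)
  have hright : ∑ t : Fin N, (2 * η * (ℓ t v + g * ∑ j, |v j|) + η ^ 2 * B)
      = 2 * η * ∑ t, (ℓ t v + g * ∑ j, |v j|) + N * η ^ 2 * B := by
    rw [sum_add_distrib, ← mul_sum, sum_const, card_univ, Fintype.card_fin, nsmul_eq_mul]
    ring
  rw [← sub_le_iff_le_add', le_div_iff₀ (by positivity)]
  linear_combination h + hleft + hright

end TruncatedGradient

/-- The involution `(σ, a) ↦ (update σ t a, σ t)` of `(ι → α) × α` exchanges the draw at `t`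
with an independent one. -/
lemma expect_apply_eq_expect_expect {ι α M : Type*} [Fintype ι] [DecidableEq ι] [Fintype α]
    [AddCommMonoid M] [Module ℚ≥0 M] (t : ι) (F : α → (ι → α) → M)
    (hF : ∀ a b σ, F a (update σ t b) = F a σ) :
    𝔼 σ, F (σ t) σ = 𝔼 σ, 𝔼 a, F a σ := by
  have hinv : Involutive fun p : (ι → α) × α => (update p.1 t p.2, p.1 t) := by
    intro p; simp
  calc 𝔼 σ, F (σ t) σ = 𝔼 σ, 𝔼 _a : α, F (σ t) σ :=
        expect_congr rfl fun σ _ => (expect_const (univ_nonempty_iff.2 ⟨σ t⟩) _).symm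
    _ = 𝔼 p : (ι → α) × α, F (p.1 t) p.1 := by rw [← univ_product_univ, expect_product]
    _ = 𝔼 p : (ι → α) × α, F p.2 p.1 :=
        (Fintype.expect_equiv hinv.toPerm _ _ fun p => by simp [hF]).symm
    _ = 𝔼 σ, 𝔼 a, F a σ := by rw [← univ_product_univ, expect_product]

lemma sum_div_card_eq_sum_expect_div {Ω : Type*} [Fintype Ω] (N : ℕ) (c : ℝ)
    (X : Ω → ℕ → ℝ) :
    (∑ σ, c / N * ∑ t ∈ range N, X σ t) / Fintype.card Ω
      = (∑ t : Fin N, 𝔼 σ, c * X σ t) / N := by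
  rw [← Fintype.expect_eq_sum_div_card, ← expect_sum_comm, expect_div]
  refine expect_congr rfl fun σ _ => ?_
  rw [← Fin.sum_univ_eq_sum_range (X σ), sum_div, mul_sum]
  exact sum_congr rfl fun t _ => by ring

lemma expect_mul_add_const {α : Type*} [Fintype α] [Nonempty α] (f : α → ℝ) (a b : ℝ) :
    𝔼 i, (a * f i + b) = a * (1 / Fintype.card α * ∑ i, f i) + b := by
  rw [expect_add_distrib, Fintype.expect_const, ← mul_expect, Fintype.expect_eq_sum_div_card]
  ring

lemma apply_update_eq_of_causal {α β : Type*} {N : ℕ} {w : (Fin N → α) → ℕ → β}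
    (h0 : ∀ σ σ', w σ 0 = w σ' 0)
    (hstep : ∀ σ σ' (t : Fin N), σ t = σ' t → w σ t = w σ' t → w σ (t + 1) = w σ' (t + 1))
    (σ : Fin N → α) (t : Fin N) (a : α) : w (update σ t a) t = w σ t := by
  suffices ∀ s ≤ (t : ℕ), w (update σ t a) s = w σ s from this t le_rfl
  intro s
  induction s with
  | zero => exact fun _ => h0 _ _
  | succ s ih =>
    intro hs
    have hsN : s < N := by omega
    exact hstep _ _ ⟨s, hsN⟩ (update_of_ne (Fin.ne_of_val_ne (by simp; omega)) _ _)
      (ih (by omega))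

/-- The draws `σ : Fin Tn → Fin n` are i.i.d. uniform, so the expectation is the average over all
`n ^ Tn` draw sequences. -/
theorem stochastic_regularized_regret_general (d n Tn : ℕ) (hn : 0 < n) (hT : 0 < Tn)
    (L : Fin n → (Fin d → ℝ) → ℝ)
    (gradL : (Fin d → ℝ) → Fin n → Fin d → ℝ)
    (A B η g : ℝ) (hη : 0 < η) (hAη : A * η < 2)
    (hg : 0 ≤ g)
    (hsub : ∀ (u v : Fin d → ℝ) (i : Fin n),
      ∑ j, (v j - u j) * gradL u i j ≤ L i v - L i u)
    (hgrad : ∀ (u : Fin d → ℝ) (i : Fin n),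
      ∑ j, (gradL u i j) ^ 2 ≤ A * L i u + B)
    (R : (Fin d → ℝ) → ℝ → ℝ)
    (hR : ∀ u c, R u c = (1 / n) * ∑ i, L i u + c * ∑ j, |u j|)
    (w : (Fin Tn → Fin n) → ℕ → Fin d → ℝ)
    (hw0 : ∀ σ j, w σ 0 j = 0)
    (hupdate : ∀ (σ : Fin Tn → Fin n) (t : Fin Tn) (j : Fin d),
      w σ (t + 1) j = T (w σ t j - η * gradL (w σ t) (σ t) j) (g * η))
    (wbar : Fin d → ℝ) :
    (∑ σ : Fin Tn → Fin n,
        (1 - 0.5 * A * η) / Tn *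
          ∑ t ∈ Finset.range Tn, R (w σ t) (g / (1 - 0.5 * A * η))) / (n ^ Tn)
      ≤ (η / 2) * B + (∑ j, (wbar j) ^ 2) / (2 * η * Tn) + R wbar g := by
  set c := 1 - 0.5 * A * η with hc_def
  have hc : 0 < c := by norm_num [hc_def]; linarith
  have hcausal : ∀ σ (t : Fin Tn) a, w (update σ t a) t = w σ t :=
    apply_update_eq_of_causal (fun σ σ' => funext fun j => by rw [hw0, hw0])
      (fun σ σ' t hσ hw => funext fun j => by rw [hupdate, hupdate, hσ, hw])
  have hpath : ∀ σ : Fin Tn → Fin n,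
      ∑ t, (c * L (σ t) (w σ t) + g * ∑ j, |w σ t j|)
        ≤ ∑ t, (L (σ t) wbar + g * ∑ j, |wbar j|)
          + (Tn * η ^ 2 * B + ∑ j, wbar j ^ 2) / (2 * η) := by
    intro σ
    convert truncated_gradient_regret (fun t => L (σ t)) (fun t => gradL (w σ t) (σ t)) (w σ)
      wbar hη hg (fun t => hsub _ _ _) (fun t => hgrad _ _) (hw0 σ) (hupdate σ) using 4
    norm_num [hc_def]; ring
  have : Nonempty (Fin n) := ⟨⟨0, hn⟩⟩
  have hexpect_loss : ∀ u a b, 𝔼 i, (a * L i u + b) = a * ((1 / n) * ∑ i, L i u) + b := by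
    simpa using fun u => expect_mul_add_const fun i => L i u
  have hresample_iterate : ∀ t : Fin Tn, 𝔼 σ, (c * L (σ t) (w σ t) + g * ∑ j, |w σ t j|)
      = 𝔼 σ, c * R (w σ t) (g / c) := fun t => by
    rw [expect_apply_eq_expect_expect t (fun i σ => c * L i (w σ t) + g * ∑ j, |w σ t j|)
      fun i a σ => by simp only [hcausal]]
    refine expect_congr rfl fun σ _ => ?_
    rw [hexpect_loss, hR]; field_simp
  have hresample_comparator : ∀ t : Fin Tn,
      𝔼 σ : Fin Tn → Fin n, (L (σ t) wbar + g * ∑ j, |wbar j|) = R wbar g := fun t => by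
    rw [expect_apply_eq_expect_expect t (fun i _ => L i wbar + g * ∑ j, |wbar j|)
      fun _ _ _ => rfl, Fintype.expect_const, hR]
    simpa using hexpect_loss wbar 1 (g * ∑ j, |wbar j|)
  have hmean := expect_le_expect (s := univ) fun σ _ => hpath σ
  rw [expect_add_distrib, expect_sum_comm, expect_sum_comm,
    sum_congr rfl fun t _ => hresample_iterate t, sum_congr rfl fun t _ => hresample_comparator t,
    Fintype.expect_const, sum_const, card_univ, Fintype.card_fin, nsmul_eq_mul] at hmean
  have hcard : ((n : ℝ) ^ Tn) = Fintype.card (Fin Tn → Fin n) := by simp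
  rw [hcard, sum_div_card_eq_sum_expect_div, div_le_iff₀ (by exact_mod_cast hT)]
  calc _ ≤ _ := hmean
    _ = _ := by field_simp; ring

/-- Stochastic regularized regret bound (Theorem 3).  The draws `σ : Fin Tn → Fin n` are
i.i.d. uniform, so the expectation is the average over all `n^Tn` draw sequences.
`gradL u i` is a subgradient of `L i` at `u`; starting from `w σ 0 = 0`, the iterates
follow the truncated gradient update driven by the draws `σ`. -/
theorem stochastic_regularized_regret (d n Tn : ℕ) (hn : 0 < n) (hT : 0 < Tn)
    (L : Fin n → (Fin d → ℝ) → ℝ)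
    (gradL : (Fin d → ℝ) → Fin n → Fin d → ℝ)
    (A B η g : ℝ) (hA : 0 ≤ A) (hB : 0 ≤ B) (hη : 0 < η) (hAη : A * η < 2)
    (hg : 0 ≤ g)
    (hsub : ∀ (u v : Fin d → ℝ) (i : Fin n),
      ∑ j, (v j - u j) * gradL u i j ≤ L i v - L i u)
    (hgrad : ∀ (u : Fin d → ℝ) (i : Fin n),
      ∑ j, (gradL u i j) ^ 2 ≤ A * L i u + B)
    (R : (Fin d → ℝ) → ℝ → ℝ)
    (hR : ∀ u c, R u c = (1 / n) * ∑ i, L i u + c * ∑ j, |u j|)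
    (w : (Fin Tn → Fin n) → ℕ → Fin d → ℝ)
    (hw0 : ∀ σ j, w σ 0 j = 0)
    (hupdate : ∀ (σ : Fin Tn → Fin n) (t : Fin Tn) (j : Fin d),
      w σ (t + 1) j = T (w σ t j - η * gradL (w σ t) (σ t) j) (g * η))
    (wbar : Fin d → ℝ) :
    (∑ σ : Fin Tn → Fin n,
        (1 - 0.5 * A * η) / Tn *
          ∑ t ∈ Finset.range Tn, R (w σ t) (g / (1 - 0.5 * A * η))) / (n ^ Tn)
      ≤ (η / 2) * B + (∑ j, (wbar j) ^ 2) / (2 * η * Tn) + R wbar g :=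
  stochastic_regularized_regret_general d n Tn hn hT L gradL A B η g hη hAη hg hsub hgrad R hR w hw0
    hupdate wbar
end

section
/- The one-step inner-product bound: let w' = T₁(ṽ, gη, θ) coordinatewise, with 0 ≤ gη ≤ θ. Then for any w̄ ∈ ℝᵈ, -(w̄ - w')ᵀ(w' - ṽ) ≤ gη·[Σⱼ |w̄ⱼ|·I(|w'ⱼ| ≤ θ) - Σⱼ |w'ⱼ|·I(|w'ⱼ| ≤ θ)]. -/
/-!
On the coordinates with `|ṽⱼ| ≤ θ`, `w'ⱼ` is the soft thresholding of `ṽⱼ` at level `gη`, i.e. the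
proximal point of `gη |·|`: then `ṽⱼ - w'ⱼ = gη sⱼ` for a subgradient `sⱼ` of `|·|` at `w'ⱼ`, and the
subgradient inequality `sⱼ (w̄ⱼ - w'ⱼ) ≤ |w̄ⱼ| - |w'ⱼ|` is the bound for that coordinate. On the other
coordinates `w'ⱼ = ṽⱼ`, `|w'ⱼ| > θ`, and both sides vanish. Summing over `j` gives the theorem.
-/

open Finset

section SoftThreshold

variable {α v : ℝ}

theorem sub_mul_sub_max_zero_le (b : ℝ) (hα : 0 ≤ α) (hv : 0 ≤ v) :
    (b - max 0 (v - α)) * (v - max 0 (v - α)) ≤ α * (|b| - |max 0 (v - α)|) := by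
  rcases le_total α v with hαv | hvα
  · rw [max_eq_right (sub_nonneg.2 hαv), abs_of_nonneg (sub_nonneg.2 hαv)]
    nlinarith [le_abs_self b]
  · rw [max_eq_left (sub_nonpos.2 hvα), abs_zero]
    calc (b - 0) * (v - 0) ≤ |b| * v := by
          simpa using mul_le_mul_of_nonneg_right (le_abs_self b) hv
      _ ≤ α * (|b| - 0) := by nlinarith [abs_nonneg b]

theorem sub_mul_sub_min_zero_le (b : ℝ) (hα : 0 ≤ α) (hv : v ≤ 0) :
    (b - min 0 (v + α)) * (v - min 0 (v + α)) ≤ α * (|b| - |min 0 (v + α)|) := by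
  have h := sub_mul_sub_max_zero_le (-b) hα (neg_nonneg.2 hv)
  have hmin : min 0 (v + α) = -max 0 (-v - α) := by
    rw [show -v - α = -(v + α) by ring, ← neg_zero, max_neg_neg, neg_neg, neg_zero]
  rw [hmin, abs_neg]
  rw [abs_neg] at h
  linarith

end SoftThreshold

section T1

variable {v α θ : ℝ}

theorem T1_of_lt_abs (h : θ < |v|) : T1 v α θ = v := by
  have hpos : ¬(0 ≤ v ∧ v ≤ θ) := fun ⟨h0, hθ⟩ => by rw [abs_of_nonneg h0] at h; linarith
  have hneg : ¬(-θ ≤ v ∧ v ≤ 0) := fun ⟨hθ, h0⟩ => by rw [abs_of_nonpos h0] at h; linarith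
  rw [T1, if_neg hpos, if_neg hneg]

theorem abs_T1_le_abs (hα : 0 ≤ α) : |T1 v α θ| ≤ |v| := by
  unfold T1
  split_ifs with hpos hneg
  · rw [abs_of_nonneg (le_max_left _ _), abs_of_nonneg hpos.1]
    exact max_le hpos.1 (by linarith)
  · rw [abs_of_nonpos (min_le_left _ _), abs_of_nonpos hneg.2, neg_le_neg_iff]
    exact le_min hneg.2 (by linarith)
  · exact le_rfl

theorem sub_mul_sub_T1_le_of_abs_le (hα : 0 ≤ α) (hv : |v| ≤ θ) (b : ℝ) :
    (b - T1 v α θ) * (v - T1 v α θ) ≤ α * (|b| - |T1 v α θ|) := by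
  rcases le_or_gt 0 v with h0 | h0
  · have hpos : 0 ≤ v ∧ v ≤ θ := ⟨h0, (le_abs_self v).trans hv⟩
    rw [T1, if_pos hpos]
    exact sub_mul_sub_max_zero_le b hα h0
  · have hpos : ¬(0 ≤ v ∧ v ≤ θ) := fun h => h0.not_ge h.1
    have hneg : -θ ≤ v ∧ v ≤ 0 := ⟨(abs_le.1 hv).1, h0.le⟩
    rw [T1, if_neg hpos, if_pos hneg]
    exact sub_mul_sub_min_zero_le b hα h0.le

theorem neg_sub_mul_T1_sub_le (hα : 0 ≤ α) (b : ℝ) :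
    -((b - T1 v α θ) * (T1 v α θ - v))
      ≤ α * (|b| * (if |T1 v α θ| ≤ θ then (1 : ℝ) else 0)
          - |T1 v α θ| * (if |T1 v α θ| ≤ θ then (1 : ℝ) else 0)) := by
  by_cases hv : |v| ≤ θ
  · rw [if_pos ((abs_T1_le_abs hα).trans hv)]
    linarith [sub_mul_sub_T1_le_of_abs_le hα hv b]
  · rw [T1_of_lt_abs (not_le.1 hv), if_neg hv]
    simp

end T1

theorem one_step_inner_product_bound_general (d : ℕ) (g η θ : ℝ)
    (hg : 0 ≤ g) (hη : 0 ≤ η)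
    (vt w' : Fin d → ℝ) (hw' : ∀ j, w' j = T1 (vt j) (g * η) θ)
    (wbar : Fin d → ℝ) :
    -(∑ j, (wbar j - w' j) * (w' j - vt j))
      ≤ g * η * ((∑ j, |wbar j| * (if |w' j| ≤ θ then (1 : ℝ) else 0))
          - ∑ j, |w' j| * (if |w' j| ≤ θ then (1 : ℝ) else 0)) := by
  rw [← sum_neg_distrib, ← sum_sub_distrib, mul_sum]
  refine sum_le_sum fun j _ => ?_
  rw [hw' j]
  exact neg_sub_mul_T1_sub_le (mul_nonneg hg hη) (wbar j)

/-- One-step inner-product bound used in the proof of Lemma 5. -/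
theorem one_step_inner_product_bound (d : ℕ) (g η θ : ℝ)
    (hg : 0 ≤ g) (hη : 0 ≤ η) (hgθ : g * η ≤ θ)
    (vt w' : Fin d → ℝ) (hw' : ∀ j, w' j = T1 (vt j) (g * η) θ)
    (wbar : Fin d → ℝ) :
    -(∑ j, (wbar j - w' j) * (w' j - vt j))
      ≤ g * η * ((∑ j, |wbar j| * (if |w' j| ≤ θ then (1 : ℝ) else 0))
          - ∑ j, |w' j| * (if |w' j| ≤ θ then (1 : ℝ) else 0)) :=
  one_step_inner_product_bound_general d g η θ hg hη vt w' hw' wbar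
end
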